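/- arXiv:1408.2955 — 4 statements merged into one kernel-verified Lean document; each statement's English description precedes it below -/
import Mathlib

section
/- For every nonempty list U over a type α and every natural number n ≥ 1, the cycle of the list obtained by concatenating U with itself n times equals the cycle of U. (This is the validity of the PGA axiom (X^n)^ω = X^ω in the model of finite and eventually periodic infinite sequences.) -/
/-- The `n`-th tail (suffix) of a stream `s : ℕ → α`: the stream `k ↦ s (n + k)`. -/
def streamTail {α : Type*} (s : ℕ → α) (n : ℕ) : ℕ → α := fun k => s (n + k)

/-- The cycle of a nonempty list `U`: the stream `k ↦ U[k mod |U|]`. -/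
def listCycle {α : Type*} (U : List α) (h : 0 < U.length) : ℕ → α :=
  fun k => U.get ⟨k % U.length, Nat.mod_lt k h⟩

/-- Prepending a list `L` to a stream `s`: the first `|L|` elements are those of `L`,
the remaining elements are those of `s` in order. -/
def listPrepend {α : Type*} (L : List α) (s : ℕ → α) : ℕ → α :=
  fun k => if hk : k < L.length then L.get ⟨k, hk⟩ else s (k - L.length)

/-- `L` is a prefix of the stream `s`: the first `|L|` elements of `s`, in order, form `L`. -/
def isPrefixOfStream {α : Type*} (L : List α) (s : ℕ → α) : Prop :=
  ∀ (i : ℕ) (h : i < L.length), L.get ⟨i, h⟩ = s i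


lemma getElem_flatten_replicate {α : Type*} (U : List α) (n : ℕ) (i : ℕ)
    (hi : i < (List.flatten (List.replicate n U)).length) (hm : i % U.length < U.length) :
    (List.flatten (List.replicate n U))[i] = U[i % U.length] := by
  induction n generalizing i with
  | zero => simp at hi
  | succ n ih =>
    have hflat : List.flatten (List.replicate (n+1) U) = U ++ List.flatten (List.replicate n U) := by
      simp [List.replicate_succ]
    rw [List.getElem_of_eq hflat hi]
    rcases lt_or_ge i U.length with hlt | hge
    · rw [List.getElem_append_left hlt]
      congr 1
      exact (Nat.mod_eq_of_lt hlt).symm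
    · rw [List.getElem_append_right hge]
      have h2 : i - U.length < (List.flatten (List.replicate n U)).length := by
        have h3 := hi
        simp [List.length_flatten, List.sum_replicate, smul_eq_mul] at h3 ⊢
        have h4 : (n+1)*U.length = n*U.length + U.length := by ring
        omega
      rw [ih _ h2 (Nat.mod_lt _ (by omega))]
      congr 1
      conv_rhs => rw [← Nat.sub_add_cancel hge, Nat.add_mod_right]

/-- PGA axiom `(X^n)^ω = X^ω`: the cycle of `n ≥ 1` concatenated copies of `U` equals
the cycle of `U`. -/
theorem pga_axiom_PGA2 {α : Type*} (U : List α) (hU : 0 < U.length) (n : ℕ) (hn : 1 ≤ n)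
    (h : 0 < (List.flatten (List.replicate n U)).length) :
    listCycle (List.flatten (List.replicate n U)) h = listCycle U hU := by
  funext k
  simp only [listCycle, List.get_eq_getElem]
  rw [getElem_flatten_replicate U n _ (Nat.mod_lt k h) (Nat.mod_lt _ hU)]
  congr 1
  have hdvd : U.length ∣ (List.flatten (List.replicate n U)).length := by
    simp [List.length_flatten, List.sum_replicate, smul_eq_mul]
  exact Nat.mod_mod_of_dvd k hdvd
end

section
/- For all lists U and V over a type α such that U ++ V is nonempty, the cycle of U ++ V equals the stream obtained by prepending the list U to the cycle of V ++ U. (This is the validity of the PGA axiom (X ⧺ Y)^ω = X ⧺ (Y ⧺ X)^ω in the model of finite and eventually periodic infinite sequences.) -/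
/-! Rotating a list by `n` shifts its cycle by `n`, so the cycle of `L` is the first `n`
entries of `L` followed by the cycle of `L.rotate n`. For `L = U ++ V` and `n = |U|` these are
`U` and `V ++ U`. -/

theorem listCycle_of_lt {α : Type*} {L : List α} (h : 0 < L.length) {k : ℕ}
    (hk : k < L.length) : listCycle L h k = L[k] := by
  simp [listCycle, Nat.mod_eq_of_lt hk]

theorem listCycle_rotate {α : Type*} {L : List α} (h : 0 < L.length) (n : ℕ)
    (hr : 0 < (L.rotate n).length) (k : ℕ) :
    listCycle (L.rotate n) hr k = listCycle L h (k + n) := by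
  simp [listCycle, List.getElem_rotate, Nat.mod_add_mod]

theorem listCycle_eq_listPrepend_take_rotate {α : Type*} {L : List α} (h : 0 < L.length)
    {n : ℕ} (hn : n ≤ L.length) (hr : 0 < (L.rotate n).length) :
    listCycle L h = listPrepend (L.take n) (listCycle (L.rotate n) hr) := by
  funext k
  have hlen : (L.take n).length = n := List.length_take_of_le hn
  unfold listPrepend
  split_ifs with hk
  · rw [hlen] at hk
    simp [listCycle_of_lt h (lt_of_lt_of_le hk hn), List.getElem_take]
  · rw [hlen] at hk ⊢
    rw [listCycle_rotate h, Nat.sub_add_cancel (not_lt.mp hk)]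

/-- PGA axiom `(X ⧺ Y)^ω = X ⧺ (Y ⧺ X)^ω`: the cycle of `U ++ V` equals `U` prepended
to the cycle of `V ++ U`. -/
theorem pga_axiom_PGA4 {α : Type*} (U V : List α) (h : 0 < (U ++ V).length)
    (h' : 0 < (V ++ U).length) :
    listCycle (U ++ V) h = listPrepend U (listCycle (V ++ U) h') := by
  convert listCycle_eq_listPrepend_take_rotate h (n := U.length) (by simp)
    (by rwa [List.length_rotate]) using 3
  · exact List.take_left.symm
  · exact (List.rotate_append_length_eq U V).symm
end

section
/- A stream s over a type α has only finitely many distinct tails if and only if there exist a natural number N and a positive natural number p such that s(n + p) = s(n) for all n ≥ N. -/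
/-- A stream has only finitely many distinct tails iff it is eventually periodic. -/
theorem finitely_many_tails_iff_eventually_periodic {α : Type*} (s : ℕ → α) :
    (Set.range (streamTail s)).Finite ↔
      ∃ N p : ℕ, 0 < p ∧ ∀ n ≥ N, s (n + p) = s n := by

  constructor
  · intro hfin
    haveI : Finite (Set.range (streamTail s)) := hfin
    obtain ⟨i, j, hne, heq⟩ := Finite.exists_ne_map_eq_of_infinite
      (fun n => (⟨streamTail s n, Set.mem_range_self n⟩ : Set.range (streamTail s)))
    have heq' : streamTail s i = streamTail s j := congrArg Subtype.val heq
    rcases lt_or_gt_of_ne hne with hij | hij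
    · refine ⟨i, j - i, Nat.sub_pos_of_lt hij, fun n hn => ?_⟩
      have := congrFun heq' (n - i)
      simp only [streamTail] at this
      rw [Nat.add_sub_cancel' hn] at this
      have h2 : j + (n - i) = n + (j - i) := by omega
      rw [h2] at this
      exact this.symm
    · refine ⟨j, i - j, Nat.sub_pos_of_lt hij, fun n hn => ?_⟩
      have := congrFun heq' (n - j)
      simp only [streamTail] at this
      rw [Nat.add_sub_cancel' hn] at this
      have h2 : i + (n - j) = n + (i - j) := by omega
      rw [h2] at this
      exact this
  · rintro ⟨N, p, hp, hper⟩
    have key : ∀ n, ∃ m ≤ N + p, streamTail s n = streamTail s m := by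
      intro n
      induction n using Nat.strong_induction_on with
      | _ n ih =>
        by_cases hn : n ≤ N + p
        · exact ⟨n, hn, rfl⟩
        · have hnp : n - p < n := by omega
          obtain ⟨m, hm, heq⟩ := ih (n - p) hnp
          refine ⟨m, hm, ?_⟩
          rw [← heq]
          funext k
          simp only [streamTail]
          have : n + k = (n - p + k) + p := by omega
          rw [this, hper (n - p + k) (by omega)]
    have : Set.range (streamTail s) ⊆ streamTail s '' (Set.Iic (N + p)) := by
      rintro _ ⟨n, rfl⟩
      obtain ⟨m, hm, heq⟩ := key n
      exact ⟨m, hm, heq.symm⟩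
    exact Set.Finite.subset ((Set.finite_Iic _).image _) this
end

section
/- A stream s over a type α has only finitely many distinct tails if and only if there exist a (possibly empty) list L over α and a nonempty list U over α such that s equals the stream obtained by prepending L to the cycle of U. -/
/-- A stream has only finitely many distinct tails iff it is a list prepended to the
cycle of a nonempty list. -/
theorem finitely_many_tails_iff_prepend_cycle {α : Type*} (s : ℕ → α) :
    (Set.range (streamTail s)).Finite ↔
      ∃ (L U : List α) (h : 0 < U.length), s = listPrepend L (listCycle U h) := by
  constructor
  · intro hfin
    have hni : ¬ Function.Injective (streamTail s) := fun hinj =>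
      (Set.infinite_range_of_injective hinj) hfin
    rw [Function.not_injective_iff] at hni
    obtain ⟨a, b, hab, hne⟩ := hni
    -- wlog i < j
    obtain ⟨i, j, hij, hlt⟩ : ∃ i j, streamTail s i = streamTail s j ∧ i < j := by
      rcases Nat.lt_or_ge a b with h | h
      · exact ⟨a, b, hab, h⟩
      · exact ⟨b, a, hab.symm, lt_of_le_of_ne h (Ne.symm hne)⟩
    set p := j - i with hp
    have hppos : 0 < p := by omega
    have hper : ∀ k, s (i + p + k) = s (i + k) := by
      intro k
      have := congrFun hij k
      simp only [streamTail] at this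
      have hj : j = i + p := by omega
      rw [hj] at this
      exact this.symm
    have hmod : ∀ k, s (i + k) = s (i + k % p) := by
      intro k
      induction k using Nat.strong_induction_on with
      | _ k ih =>
        rcases Nat.lt_or_ge k p with h | h
        · rw [Nat.mod_eq_of_lt h]
        · have h1 : s (i + k) = s (i + (k - p)) := by
            have := hper (k - p)
            rw [show i + p + (k - p) = i + k by omega] at this
            exact this
          have h2 : k % p = (k - p) % p := by
            conv_lhs => rw [show k = (k - p) + p by omega]
            rw [Nat.add_mod_right]
          rw [h1, ih (k - p) (by omega), h2]
    refine ⟨List.ofFn (fun t : Fin i => s t), List.ofFn (fun t : Fin p => s (i + t)),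
      by simpa using hppos, ?_⟩
    funext k
    simp only [listPrepend, listCycle, List.length_ofFn, List.get_eq_getElem,
      List.getElem_ofFn]
    split_ifs with hk
    · rfl
    · have := hmod (k - i)
      rw [show i + (k - i) = k by omega] at this
      rw [this]
  · rintro ⟨L, U, hU, rfl⟩
    have hshift : ∀ m, L.length ≤ m →
        streamTail (listPrepend L (listCycle U hU)) (m + U.length)
          = streamTail (listPrepend L (listCycle U hU)) m := by
      intro m hm
      funext k
      simp only [streamTail, listPrepend, listCycle]
      rw [dif_neg (by omega), dif_neg (by omega)]
      have hmm : (m + U.length + k - L.length) % U.length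
          = (m + k - L.length) % U.length := by
        rw [show m + U.length + k - L.length = (m + k - L.length) + U.length by omega,
          Nat.add_mod_right]
      simp only [hmm]
    have hsub : Set.range (streamTail (listPrepend L (listCycle U hU))) ⊆
        streamTail (listPrepend L (listCycle U hU)) '' Set.Iio (L.length + U.length) := by
      rintro x ⟨n, rfl⟩
      induction n using Nat.strong_induction_on with
      | _ n ih =>
        rcases Nat.lt_or_ge n (L.length + U.length) with h | h
        · exact ⟨n, h, rfl⟩
        · have h1 := hshift (n - U.length) (by omega)
          rw [show n - U.length + U.length = n by omega] at h1
          rw [h1]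
          exact ih (n - U.length) (by omega)
    exact Set.Finite.subset ((Set.finite_Iio _).image _) hsub
end
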